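/- For a triple of random variables (A, B, C) on finite or countably infinite sets 𝒜 × ℬ × 𝒞 with ℬ finite, and any δ ∈ (0, 1], it holds that I_∞^δ(A; B | C) ≤ log |ℬ| − log δ. -/

import Mathlib

open scoped BigOperators
open Filter Topology

noncomputable section

/-- `p` is a probability mass function on `α`. -/
def IsPmf {α : Type*} (p : α → ℝ) : Prop :=
  (∀ a, 0 ≤ p a) ∧ HasSum p 1

/-- Probability of the set `S` under the pmf `p`. -/
def prS {α : Type*} (p : α → ℝ) (S : Set α) : ℝ :=
  ∑' a, Set.indicator S p a

/-- Smooth max Rényi divergence `D_∞^δ(P‖Q)`. -/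
def Dinf {α : Type*} (P Q : α → ℝ) (δ : ℝ) : ℝ :=
  sInf { d : ℝ | ∃ ψ : α → ℝ, (∀ a, 0 ≤ ψ a ∧ ψ a ≤ 1) ∧
    1 - δ ≤ ∑' a, ψ a * P a ∧
    d = max 0 (Real.log (⨆ a, ψ a * P a / Q a)) }

def margFst {α β : Type*} (π : α × β → ℝ) : α → ℝ := fun a => ∑' b, π (a, b)

def margSnd {α β : Type*} (π : α × β → ℝ) : β → ℝ := fun b => ∑' a, π (a, b)

/-- `I_∞^δ(A;B)` for a joint pmf `π` of the pair `(A,B)`: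
`D_∞^δ(P_{AB} ‖ P_A × P_B)`. -/
def Iinf {α β : Type*} (π : α × β → ℝ) (δ : ℝ) : ℝ :=
  Dinf π (fun x => margFst π x.1 * margSnd π x.2) δ

/-- `I_∞^δ(A;B|C)` for a joint pmf `π` of the triple `(A,B,C)`:
`D_∞^δ(P_{ABC} ‖ P_{AC} × P_{B|C})`. -/
def IinfCond {α β γ : Type*} (π : α × β × γ → ℝ) (δ : ℝ) : ℝ :=
  Dinf π (fun x => (∑' b, π (x.1, b, x.2.2)) *
    ((∑' a, π (a, x.2.1, x.2.2)) / (∑' a, ∑' b, π (a, b, x.2.2)))) δ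

/-- The set whose infimum defines the limsup in probability. -/
def pLimsupSet {ι : ℕ → Type*} (p : ∀ n, ι n → ℝ) (S : ∀ n, ι n → ℝ) : Set ℝ :=
  { c : ℝ | Tendsto (fun n => prS (p n) { w | c < S n w }) atTop (𝓝 0) }

/-- Limsup in probability of the sequence of random variables `S n`, the `n`-th
sample being distributed according to the pmf `p n`. -/
def pLimsup {ι : ℕ → Type*} (p : ∀ n, ι n → ℝ) (S : ∀ n, ι n → ℝ) : ℝ :=
  sInf (pLimsupSet p S)

def specSupMISet {A B : ℕ → Type*} (π : ∀ n, A n × B n → ℝ) : Set ℝ :=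
  pLimsupSet π (fun n x =>
    (1 / (n : ℝ)) * Real.log ((π n x / margFst (π n) x.1) / margSnd (π n) x.2))

/-- Spectral sup-mutual information rate `Ī(A;B)` of a sequence of joint pmfs. -/
def specSupMI {A B : ℕ → Type*} (π : ∀ n, A n × B n → ℝ) : ℝ :=
  sInf (specSupMISet π)

def specSupCMISet {A B C : ℕ → Type*} (π : ∀ n, A n × B n × C n → ℝ) : Set ℝ :=
  pLimsupSet π (fun n x =>
    (1 / (n : ℝ)) * Real.log (
      (π n x / (∑' b, π n (x.1, b, x.2.2))) /
      ((∑' a, π n (a, x.2.1, x.2.2)) / (∑' a, ∑' b, π n (a, b, x.2.2)))))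

/-- Conditional spectral sup-mutual information rate `Ī(A;B|C)`. -/
def specSupCMI {A B C : ℕ → Type*} (π : ∀ n, A n × B n × C n → ℝ) : ℝ :=
  sInf (specSupCMISet π)

/-- A code for the (one-shot) successive refinement problem. -/
structure SRCode (𝒳 𝒴 𝒵 : Type*) (M₁ M₂ : ℕ) where
  f₁ : 𝒳 → Fin M₁
  f₂ : 𝒳 → Fin M₂
  φ₁ : Fin M₁ → 𝒴
  φ₂ : Fin M₁ → Fin M₂ → 𝒵

/-- `((M₁,M₂),(D₁,D₂))` is `(ε₁,ε₂)`-achievable. -/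
def EpsAchievable {𝒳 𝒴 𝒵 : Type*} (pX : 𝒳 → ℝ)
    (d₁ : 𝒳 → 𝒴 → ℝ) (d₂ : 𝒳 → 𝒵 → ℝ)
    (D₁ D₂ ε₁ ε₂ : ℝ) (M₁ M₂ : ℕ) : Prop :=
  ∃ C : SRCode 𝒳 𝒴 𝒵 M₁ M₂,
    prS pX { x | D₁ < d₁ x (C.φ₁ (C.f₁ x)) } ≤ ε₁ ∧
    prS pX { x | D₂ < d₂ x (C.φ₂ (C.f₁ x) (C.f₂ x)) } ≤ ε₂

/-- The set `𝓜(D,ε|X)` of pairs of numbers of codewords. -/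
def MSet {𝒳 𝒴 𝒵 : Type*} (pX : 𝒳 → ℝ)
    (d₁ : 𝒳 → 𝒴 → ℝ) (d₂ : 𝒳 → 𝒵 → ℝ) (D₁ D₂ ε₁ ε₂ : ℝ) : Set (ℕ × ℕ) :=
  { m | 0 < m.1 ∧ 0 < m.2 ∧ EpsAchievable pX d₁ d₂ D₁ D₂ ε₁ ε₂ m.1 m.2 }

/-- A sequence of codes for the successive refinement problem. -/
structure SRCodeSeq (𝒳 𝒴 𝒵 : ℕ → Type*) where
  M₁ : ℕ → ℕ
  M₂ : ℕ → ℕ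
  hM₁ : ∀ n, 0 < M₁ n
  hM₂ : ∀ n, 0 < M₂ n
  f₁ : ∀ n, 𝒳 n → Fin (M₁ n)
  f₂ : ∀ n, 𝒳 n → Fin (M₂ n)
  φ₁ : ∀ n, Fin (M₁ n) → 𝒴 n
  φ₂ : ∀ n, Fin (M₁ n) → Fin (M₂ n) → 𝒵 n

/-- `(R,D)` is fm-achievable for the general source `pX`. -/
def FmAchievable {𝒳 𝒴 𝒵 : ℕ → Type*} (pX : ∀ n, 𝒳 n → ℝ)
    (d₁ : ∀ n, 𝒳 n → 𝒴 n → ℝ) (d₂ : ∀ n, 𝒳 n → 𝒵 n → ℝ)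
    (R₁ R₂ D₁ D₂ : ℝ) : Prop :=
  ∃ C : SRCodeSeq 𝒳 𝒴 𝒵,
    pLimsup pX (fun n x => d₁ n x (C.φ₁ n (C.f₁ n x))) ≤ D₁ ∧
    pLimsup pX (fun n x => d₂ n x (C.φ₂ n (C.f₁ n x) (C.f₂ n x))) ≤ D₂ ∧
    Filter.limsup (fun n : ℕ => (1 / (n : ℝ)) * Real.log (C.M₁ n)) atTop ≤ R₁ ∧
    Filter.limsup (fun n : ℕ => (1 / (n : ℝ)) * Real.log (C.M₂ n)) atTop ≤ R₂

/-- The rate-distortion region `𝓡(D|𝐗)`. -/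
def RDRegion {𝒳 𝒴 𝒵 : ℕ → Type*} (pX : ∀ n, 𝒳 n → ℝ)
    (d₁ : ∀ n, 𝒳 n → 𝒴 n → ℝ) (d₂ : ∀ n, 𝒳 n → 𝒵 n → ℝ)
    (D₁ D₂ : ℝ) : Set (ℝ × ℝ) :=
  { R | 0 ≤ R.1 ∧ 0 ≤ R.2 ∧ FmAchievable pX d₁ d₂ R.1 R.2 D₁ D₂ }

/-- Shannon mutual information of a joint pmf. -/
def mutualInfo {α β : Type*} (π : α × β → ℝ) : ℝ :=
  ∑' x : α × β, π x * Real.log (π x / (margFst π x.1 * margSnd π x.2))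

/-!
Smooth with the test `ψ = 𝟙{P_{ABC} ≤ K · P_{AC} P_{B|C}}`, `K = |ℬ| / δ`, so that every ratio
`ψ P_{ABC} / (P_{AC} P_{B|C})` is at most `K`. Wherever `ψ = 0` we have `P_{B|C}(b | c) < 1 / K`
because `P_{ABC} ≤ P_{AC}`, so the discarded mass is at most
`∑_{b,c} P_C(c) / K = |ℬ| / K = δ`.
-/

section Divergence

variable {α : Type*}

theorem IsPmf.nonempty {p : α → ℝ} (hp : IsPmf p) : Nonempty α := by
  by_contra h
  rw [not_nonempty_iff] at h
  simpa using hp.2.tsum_eq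

theorem prS_mono {p : α → ℝ} (hp : IsPmf p) {s t : Set α} (hst : s ⊆ t) :
    prS p s ≤ prS p t :=
  Summable.tsum_le_tsum (Set.indicator_le_indicator_of_subset hst hp.1)
    (hp.2.summable.indicator s) (hp.2.summable.indicator t)

theorem Dinf_le_max_log_iSup {P Q ψ : α → ℝ} {δ : ℝ} (hψ : ∀ a, 0 ≤ ψ a ∧ ψ a ≤ 1)
    (hmass : 1 - δ ≤ ∑' a, ψ a * P a) :
    Dinf P Q δ ≤ max 0 (Real.log (⨆ a, ψ a * P a / Q a)) := by
  refine csInf_le ⟨0, ?_⟩ ⟨ψ, hψ, hmass, rfl⟩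
  rintro d ⟨ψ', -, -, rfl⟩
  exact le_max_left _ _

theorem Dinf_le_log_of_prS_le {P Q : α → ℝ} {δ K : ℝ} (hP : IsPmf P) (hK : 1 ≤ K)
    (htail : prS P {a | K * Q a < P a} ≤ δ) : Dinf P Q δ ≤ Real.log K := by
  set s := {a | P a ≤ K * Q a}
  set ψ : α → ℝ := s.indicator 1
  have hψ : ∀ a, 0 ≤ ψ a ∧ ψ a ≤ 1 := fun a => by
    by_cases ha : a ∈ s <;> simp [ψ, ha]
  have hψP : ∀ a, ψ a * P a = s.indicator P a := fun a => by
    by_cases ha : a ∈ s <;> simp [ψ, ha]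
  have hcompl : sᶜ = {a | K * Q a < P a} := by ext; simp [s]
  have hmass : 1 - δ ≤ ∑' a, ψ a * P a := by
    have hsplit := congrArg tsum (Set.indicator_self_add_compl s P)
    rw [Pi.add_def, (hP.2.summable.indicator s).tsum_add (hP.2.summable.indicator sᶜ),
      hP.2.tsum_eq, hcompl] at hsplit
    simp only [hψP]
    unfold prS at htail
    linarith
  have hratio : ∀ a, 0 ≤ ψ a * P a / Q a ∧ ψ a * P a / Q a ≤ K := by
    intro a
    rw [hψP]
    by_cases ha : a ∈ s
    · have hQ : 0 ≤ Q a := nonneg_of_mul_nonneg_right ((hP.1 a).trans ha) (by linarith)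
      rw [Set.indicator_of_mem ha]
      exact ⟨div_nonneg (hP.1 a) hQ, div_le_of_le_mul₀ hQ (by linarith) ha⟩
    · simp only [Set.indicator_of_notMem ha, zero_div]
      exact ⟨le_rfl, by linarith⟩
  have hsup : ⨆ a, ψ a * P a / Q a ≤ K := Real.iSup_le (fun a => (hratio a).2) (by linarith)
  refine (Dinf_le_max_log_iSup hψ hmass).trans (max_le (Real.log_nonneg hK) ?_)
  rcases (Real.iSup_nonneg fun a => (hratio a).1).eq_or_lt with h0 | hpos
  · rw [← h0, Real.log_zero]
    exact Real.log_nonneg hK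
  · exact Real.log_le_log hpos hsup

end Divergence

section Marginals

variable {α β γ : Type*}

theorem hasSum_margSnd {π : α × β → ℝ} {s : ℝ} (h : HasSum π s) : HasSum (margSnd π) s :=
  ((Equiv.prodComm β α).hasSum_iff.2 h).prod_fiberwise fun b =>
    (h.summable.comp_injective (Prod.mk_left_injective b)).hasSum

theorem margSnd_indicator_snd_mem (π : α × β → ℝ) (S : Set β) :
    margSnd ({x | x.2 ∈ S}.indicator π) = S.indicator (margSnd π) := by
  ext b
  by_cases hb : b ∈ S <;> simp [margSnd, hb]

def margC (π : α × β × γ → ℝ) (c : γ) : ℝ := ∑' a, ∑' b, π (a, b, c)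

def condIndepMarg (π : α × β × γ → ℝ) (x : α × β × γ) : ℝ :=
  (∑' b, π (x.1, b, x.2.2)) * (margSnd π x.2 / margC π x.2.2)

theorem iinfCond_eq_dinf (π : α × β × γ → ℝ) (δ : ℝ) :
    IinfCond π δ = Dinf π (condIndepMarg π) δ := rfl

variable [Fintype β] {π : α × β × γ → ℝ}

theorem margC_eq_sum_margSnd (hπ : Summable π) (c : γ) :
    margC π c = ∑ b, margSnd π (b, c) := by
  simp only [margC, tsum_fintype]
  exact Summable.tsum_finsetSum fun b _ => hπ.comp_injective (Prod.mk_left_injective (b, c))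

theorem hasSum_margC {s : ℝ} (h : HasSum π s) : HasSum (margC π) s := by
  have hBC := (Equiv.prodComm γ β).hasSum_iff.2 (hasSum_margSnd h)
  rw [funext (margC_eq_sum_margSnd h.summable)]
  exact hBC.prod_fiberwise fun c => hasSum_fintype (fun b => margSnd π (b, c))

/-- Since `P_{ABC} ≤ P_{AC}`, exceeding `K · P_{AC} P_{B|C}` forces `P_{B|C}(b | c) < 1 / K`. -/
theorem lt_margC_of_lt_condIndepMarg (hπ : IsPmf π) {K : ℝ} (hK : 0 ≤ K) {x : α × β × γ}
    (hx : K * condIndepMarg π x < π x) : K * margSnd π x.2 < margC π x.2.2 := by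
  obtain ⟨a, b, c⟩ := x
  set pAC := ∑' b', π (a, b', c)
  set pBC := margSnd π (b, c)
  set pC := margC π c
  have hAC : π (a, b, c) ≤ pAC :=
    (Summable.of_finite (f := fun b' => π (a, b', c))).le_tsum b fun _ _ => hπ.1 _
  have hBC : π (a, b, c) ≤ pBC :=
    (hπ.2.summable.comp_injective (Prod.mk_left_injective (b, c))).le_tsum a fun _ _ => hπ.1 _
  have hBC_C : pBC ≤ pC := by
    rw [show pC = _ from margC_eq_sum_margSnd hπ.2.summable c]
    exact Finset.single_le_sum (f := fun b' => margSnd π (b', c))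
      (fun b' _ => tsum_nonneg fun _ => hπ.1 _) (Finset.mem_univ b)
  have hπpos : 0 < π (a, b, c) := by
    refine lt_of_le_of_lt (mul_nonneg hK (mul_nonneg ?_ (div_nonneg ?_ ?_))) hx <;>
      linarith [hπ.1 (a, b, c)]
  have hpC : 0 < pC := by linarith
  have hpAC : 0 < pAC := by linarith
  have hprod : pAC * (K * pBC) < pAC * pC :=
    calc pAC * (K * pBC) = K * (pAC * (pBC / pC)) * pC := by field_simp
      _ < π (a, b, c) * pC := mul_lt_mul_of_pos_right hx hpC
      _ ≤ pAC * pC := mul_le_mul_of_nonneg_right hAC hpC.le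
  exact lt_of_mul_lt_mul_left hprod hpAC.le

theorem prS_lt_condIndepMarg_le (hπ : IsPmf π) {K : ℝ} (hK : 0 < K) :
    prS π {x | K * condIndepMarg π x < π x} ≤ Fintype.card β / K := by
  set S : Set (β × γ) := {p | K * margSnd π p < margC π p.2}
  have hS : HasSum (S.indicator (margSnd π)) (prS π {x | x.2 ∈ S}) := by
    rw [← margSnd_indicator_snd_mem]
    exact hasSum_margSnd (hπ.2.summable.indicator _).hasSum
  have hfiber : ∀ b, ∑' c, S.indicator (margSnd π) (b, c) ≤ 1 / K := fun b => by
    refine hasSum_le (fun c => ?_)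
      (hS.summable.comp_injective (Prod.mk_right_injective b)).hasSum
      ((hasSum_margC hπ.2).div_const K)
    by_cases hc : (b, c) ∈ S
    · rw [Function.comp_apply, Set.indicator_of_mem hc, le_div_iff₀ hK, mul_comm]
      exact hc.le
    · rw [Function.comp_apply, Set.indicator_of_notMem hc]
      exact div_nonneg (tsum_nonneg fun _ => tsum_nonneg fun _ => hπ.1 _) hK.le
  calc prS π {x | K * condIndepMarg π x < π x}
      ≤ prS π {x | x.2 ∈ S} := prS_mono hπ fun x hx => lt_margC_of_lt_condIndepMarg hπ hK.le hx
    _ = ∑ b, ∑' c, S.indicator (margSnd π) (b, c) := by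
      rw [← hS.tsum_eq, hS.summable.tsum_prod' fun b =>
        hS.summable.comp_injective (Prod.mk_right_injective b), tsum_fintype]
    _ ≤ ∑ _b : β, 1 / K := Finset.sum_le_sum fun b _ => hfiber b
    _ = Fintype.card β / K := by simp [div_eq_mul_inv]

end Marginals

theorem iinf_cond_le_log_card_general {α β γ : Type*}
    [Fintype β]
    (π : α × β × γ → ℝ) (hπ : IsPmf π)
    (δ : ℝ) (hδ : δ ∈ Set.Ioc (0:ℝ) 1) :
    IinfCond π δ ≤ Real.log (Fintype.card β) - Real.log δ := by
  obtain ⟨hδ0, hδ1⟩ := hδ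
  have hcard : (1 : ℝ) ≤ Fintype.card β := by
    exact_mod_cast Fintype.card_pos_iff.2 ⟨hπ.nonempty.some.2.1⟩
  have hK : 1 ≤ Fintype.card β / δ := (one_le_div hδ0).2 (hδ1.trans hcard)
  have htail : prS π {x | Fintype.card β / δ * condIndepMarg π x < π x} ≤ δ := by
    simpa [div_div_cancel₀ (by positivity : (Fintype.card β : ℝ) ≠ 0)] using
      prS_lt_condIndepMarg_le hπ (by positivity : 0 < Fintype.card β / δ)
  rw [iinfCond_eq_dinf, ← Real.log_div (by positivity) hδ0.ne']
  exact Dinf_le_log_of_prS_le hπ hK htail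

/-- Remark 4.  For a triple `(A,B,C)` with joint pmf `π` and
`ℬ` finite, `I_∞^δ(A;B|C) ≤ log |ℬ| − log δ`. -/
theorem iinf_cond_le_log_card {α β γ : Type*}
    [Countable α] [Fintype β] [Countable γ]
    (π : α × β × γ → ℝ) (hπ : IsPmf π)
    (δ : ℝ) (hδ : δ ∈ Set.Ioc (0:ℝ) 1) :
    IinfCond π δ ≤ Real.log (Fintype.card β) - Real.log δ :=
  iinf_cond_le_log_card_general π hπ δ hδ
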